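/- Let F = ℤ/dℤ, Γ a profinite group, and let E be a 2-extension 0 → B → E₁ → E₂ → A → 0 of finite d-torsion Γ-modules with B and E₂ free as F-modules. Then any two E-diagrams in the category of F-modules — that is, pairs (F, φ) with F = (0 → B → F₁ → E₂ → 0) a short exact sequence of F-modules and φ : E → F a morphism of complexes inducing the identity on B and E₂ — are isomorphic via an isomorphism of short exact sequences F → F' inducing the identity on B and E₂. -/

import Mathlib

open Function

/-- A finite discrete `d`-torsion module over a topological group `Γ`:
a finite `ZMod d`-module with a `Γ`-representation that is continuous for the
discrete topology on the module. -/
structure FdMod (d : ℕ) (Γ : Type) [Group Γ] [TopologicalSpace Γ] : Type 1 where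
  V : Type
  [acg : AddCommGroup V]
  [mod : Module (ZMod d) V]
  [fin : Finite V]
  ρ : Representation (ZMod d) Γ V
  cont : ∀ v : V, @Continuous Γ V _ ⊥ (fun γ => ρ γ v)

attribute [instance] FdMod.acg FdMod.mod FdMod.fin

namespace FdMod

variable {d : ℕ} {Γ : Type} [Group Γ] [TopologicalSpace Γ]

/-- Morphisms: `Γ`-equivariant `ZMod d`-linear maps. -/
def Hom (M N : FdMod d Γ) : Type :=
  {f : M.V →ₗ[ZMod d] N.V // ∀ γ v, f (M.ρ γ v) = N.ρ γ (f v)}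

def idHom (M : FdMod d Γ) : M.Hom M := ⟨LinearMap.id, fun _ _ => rfl⟩

def castHom {M N : FdMod d Γ} (h : M = N) : M.Hom N := by subst h; exact idHom M

def zeroHom (M N : FdMod d Γ) : M.Hom N := ⟨0, by intro γ v; simp⟩

/-- Transport of elements along an equality of objects. -/
def vcast {M N : FdMod d Γ} (h : M = N) (x : M.V) : N.V := cast (congrArg FdMod.V h) x

/-- Freeness as a `ZMod d`-module. -/
def IsFree (M : FdMod d Γ) : Prop :=
  ∃ r : ℕ, Nonempty (M.V ≃ₗ[ZMod d] (Fin r → ZMod d))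

end FdMod
/-- The data of a complex `X 0 → X 1 → ... → X (n+1)` of finite discrete
`d`-torsion `Γ`-modules; an `n`-extension of `X (n+1)` by `X 0` when `IsExt` holds. -/
structure GPre (d : ℕ) (Γ : Type) [Group Γ] [TopologicalSpace Γ] (n : ℕ) : Type 1 where
  X : ℕ → FdMod d Γ
  f : ∀ i, (X i).Hom (X (i + 1))

namespace GPre

variable {d : ℕ} {Γ : Type} [Group Γ] [TopologicalSpace Γ] {n : ℕ}

/-- `E` is an exact extension: `0 → X 0 → ... → X (n+1) → 0` is exact. -/
def IsExt (E : GPre d Γ n) : Prop :=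
  Function.Injective (E.f 0).1 ∧ Function.Surjective (E.f n).1 ∧
    ∀ i, i + 1 ≤ n → ∀ y, (E.f (i + 1)).1 y = 0 ↔ ∃ x, (E.f i).1 x = y

/-- A morphism of `n`-extensions inducing the identity on both ends. -/
def Ladder (E F : GPre d Γ n) : Prop :=
  ∃ (h0 : E.X 0 = F.X 0) (h1 : E.X (n + 1) = F.X (n + 1))
    (φ : ∀ i, (E.X i).Hom (F.X i)),
    (∀ x, (φ 0).1 x = FdMod.vcast h0 x) ∧
    (∀ x, (φ (n + 1)).1 x = FdMod.vcast h1 x) ∧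
    ∀ i, i ≤ n → ∀ x, (φ (i + 1)).1 ((E.f i).1 x) = (F.f i).1 ((φ i).1 x)

/-- One step of the Yoneda equivalence relation between `n`-extensions. -/
def ExtRel (E F : GPre d Γ n) : Prop := E.IsExt ∧ F.IsExt ∧ Ladder E F

/-- Yoneda equivalence of `n`-extensions: the equivalence relation generated by
morphisms of extensions inducing the identity on both ends. -/
def YEquiv (E F : GPre d Γ n) : Prop := Relation.EqvGen ExtRel E F

end GPre

/-- The zero module with trivial action. -/
def zeroFdMod (d : ℕ) (Γ : Type) [Group Γ] [TopologicalSpace Γ] : FdMod d Γ where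
  V := PUnit
  ρ := Representation.trivial (ZMod d) (G := Γ) (V := PUnit)
  cont := fun v => by
    have : @Continuous Γ PUnit _ ⊥ (fun _ => v) := @continuous_const Γ PUnit _ ⊥ v
    simpa using this

section Triv

variable (d : ℕ) (Γ : Type) [Group Γ] [TopologicalSpace Γ] (n : ℕ)

/-- Objects of the trivial ("split") `n`-extension `0 → B → B → 0 → ⋯ → 0 → A → A → 0`. -/
def trivX (A B : FdMod d Γ) : ℕ → FdMod d Γ :=
  fun i => if i ≤ 1 then B else if n ≤ i then A else zeroFdMod d Γ

/-- The trivial `n`-extension of `A` by `B` (for `2 ≤ n`). -/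
def trivGPre (hn : 2 ≤ n) (A B : FdMod d Γ) : GPre d Γ n where
  X := trivX d Γ n A B
  f i :=
    if h : i = 0 then FdMod.castHom (by subst h; simp [trivX]) else
    if h' : i = n then FdMod.castHom (by
      subst h'; simp only [trivX]
      rw [if_neg (by omega), if_pos (by omega), if_neg (by omega), if_pos (by omega)]) else
    FdMod.zeroHom _ _

end Triv

namespace GPre

variable {d : ℕ} {Γ : Type} [Group Γ] [TopologicalSpace Γ] {n : ℕ}

/-- The Yoneda class of the extension `E` is zero, i.e. `E` is Yoneda equivalent
to the trivial extension. -/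
def classZero (hn : 2 ≤ n) (E : GPre d Γ n) : Prop :=
  YEquiv E (trivGPre d Γ n hn (E.X (n + 1)) (E.X 0))

end GPre

/-!
Over `ℤ/dℤ` the free module `B` is injective, because `ℤ/dℤ` is self-injective. So both
sequences split through retractions onto `B`. Fix a retraction `r'` of `ι'`. Exactness of `E` at
`E₁` makes `φ₁` injective, so `r' ∘ φ₁'` extends along `φ₁` to some `r : F₁ → B`, and `r` is a
retraction of `ι = φ₁ ∘ E.f 0`. The splittings `(r, π)` and `(r', π')` identify `F₁` and `F₁'`
with `B × E₂` in a way that matches `φ₁` with `φ₁'`.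
-/

/- The preimage of `I` in `ℤ` is `(k)` with `k ∣ n = k * m`; since `m • k = 0`, also
`m • g k = 0`, which forces `k ∣ g k`, and `g` is multiplication by `g k / k`. -/
theorem ZMod.baer_self (n : ℕ) [NeZero n] : Module.Baer (ZMod n) (ZMod n) := by
  intro I g
  obtain ⟨k, hk⟩ := (IsPrincipalIdealRing.principal (I.comap (Int.castRingHom (ZMod n)))).principal
  have mem : ∀ t : ℤ, (t : ZMod n) ∈ I ↔ k ∣ t := fun t => by
    rw [← Ideal.mem_span_singleton, ← Ideal.submodule_span_eq, ← hk]
    rfl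
  have hkI : (k : ZMod n) ∈ I := (mem k).2 dvd_rfl
  obtain ⟨m, hm⟩ : k ∣ n := (mem n).1 (by simp)
  obtain ⟨b, hb⟩ := ZMod.intCast_surjective (g ⟨k, hkI⟩)
  obtain ⟨c, rfl⟩ : k ∣ b := by
    have hmb : ((m * b : ℤ) : ZMod n) = 0 := by
      have : (m : ZMod n) • (⟨k, hkI⟩ : I) = 0 := by
        ext; simp [← Int.cast_mul, mul_comm m, ← hm]
      rw [Int.cast_mul, hb, ← smul_eq_mul, ← map_smul, this, map_zero]
    rw [ZMod.intCast_zmod_eq_zero_iff_dvd, hm, mul_comm k] at hmb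
    exact (mul_dvd_mul_iff_left (by rintro rfl; simp_all [NeZero.ne n])).1 hmb
  refine ⟨LinearMap.toSpanSingleton (ZMod n) (ZMod n) c, fun x hx => ?_⟩
  obtain ⟨t, rfl⟩ := ZMod.intCast_surjective x
  obtain ⟨j, rfl⟩ := (mem t).1 hx
  have : (⟨_, hx⟩ : I) = (j : ZMod n) • ⟨k, hkI⟩ := by ext; simp [mul_comm]
  rw [this, map_smul, ← hb]
  simp only [Int.cast_mul, LinearMap.toSpanSingleton_apply, smul_eq_mul]
  ring

theorem ZMod.injective_of_linearEquiv_pi {n : ℕ} [NeZero n] {M ι : Type} [AddCommGroup M]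
    [Module (ZMod n) M] (e : M ≃ₗ[ZMod n] (ι → ZMod n)) : Module.Injective (ZMod n) M :=
  have : Module.Injective (ZMod n) (ZMod n) := (ZMod.baer_self n).injective
  ((Module.Baer.of_injective inferInstance).of_equiv e.symm).injective

section SplitExtensions

universe u

variable {R : Type*} [Ring R] {B : Type u} {E₁ C F F' : Type*}
  [AddCommGroup B] [Module R B] [AddCommGroup E₁] [Module R E₁] [AddCommGroup C] [Module R C]
  [AddCommGroup F] [Module R F]

theorem Function.Exact.injective_of_comp_injective {f₀ : B →ₗ[R] E₁} {f₁ : E₁ →ₗ[R] C}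
    (hf : Function.Exact f₀ f₁) {φ : E₁ →ₗ[R] F} {π : F →ₗ[R] C} (hπφ : ∀ x, π (φ x) = f₁ x)
    (hφf₀ : Function.Injective (φ ∘ f₀)) : Function.Injective φ := by
  refine (injective_iff_map_eq_zero φ).2 fun x hx => ?_
  obtain ⟨b, rfl⟩ := (hf x).1 (by rw [← hπφ, hx, map_zero])
  rw [hφf₀ (show φ (f₀ b) = φ (f₀ 0) by rw [hx, map_zero, map_zero]), map_zero]

variable [AddCommGroup F'] [Module R F'] [Small.{u} R] [Module.Injective R B]

theorem exists_linearEquiv_of_exact_of_injective {f₀ : B →ₗ[R] E₁} {f₁ : E₁ →ₗ[R] C}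
    (hf : Function.Exact f₀ f₁)
    {ι : B →ₗ[R] F} {π : F →ₗ[R] C} {φ : E₁ →ₗ[R] F}
    (hι : Function.Injective ι) (hπ : Function.Surjective π) (hex : Function.Exact ι π)
    (hφf₀ : ∀ x, φ (f₀ x) = ι x) (hπφ : ∀ x, π (φ x) = f₁ x)
    {ι' : B →ₗ[R] F'} {π' : F' →ₗ[R] C} {φ' : E₁ →ₗ[R] F'}
    (hι' : Function.Injective ι') (hπ' : Function.Surjective π') (hex' : Function.Exact ι' π')
    (hφf₀' : ∀ x, φ' (f₀ x) = ι' x) (hπφ' : ∀ x, π' (φ' x) = f₁ x) :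
    ∃ θ : F ≃ₗ[R] F', (∀ x, θ (ι x) = ι' x) ∧ (∀ y, π' (θ y) = π y) ∧ (∀ x, θ (φ x) = φ' x) := by
  obtain ⟨r', hr'⟩ := Module.Injective.extension_property R B B F' ι' hι' LinearMap.id
  have hφ : Function.Injective φ :=
    hf.injective_of_comp_injective hπφ (by simpa [Function.comp_def, hφf₀] using hι)
  obtain ⟨r, hr⟩ := Module.Injective.extension_property R B E₁ F φ hφ (r' ∘ₗ φ')
  have hrι : r ∘ₗ ι = LinearMap.id := LinearMap.ext fun x => calc
    r (ι x) = r' (φ' (f₀ x)) := by rw [← hφf₀]; exact congr($hr (f₀ x))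
    _ = x := by rw [hφf₀']; exact congr($hr' x)
  let e := (hex.splitInjectiveEquiv hπ ⟨r, hrι⟩).1
  let e' := (hex'.splitInjectiveEquiv hπ' ⟨r', hr'⟩).1
  have he : ∀ y, e y = (r y, π y) := fun _ => rfl
  have he' : ∀ y, e' y = (r' y, π' y) := fun _ => rfl
  refine ⟨e.trans e'.symm, fun x => e'.injective ?_, fun y => ?_, fun x => e'.injective ?_⟩
  · rw [LinearEquiv.trans_apply, LinearEquiv.apply_symm_apply, he, he',
      hex.apply_apply_eq_zero, hex'.apply_apply_eq_zero]
    simpa using congr($hrι x).trans congr($hr' x).symm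
  · exact congr(Prod.snd $(e'.apply_symm_apply (e y)))
  · rw [LinearEquiv.trans_apply, LinearEquiv.apply_symm_apply, he, he', hπφ, hπφ']
    simpa using congr($hr x)

end SplitExtensions

theorem statement16_general (d : ℕ) (hd : 2 ≤ d)
    (Γ : Type) [Group Γ] [TopologicalSpace Γ]
    (E : GPre d Γ 2) (hE : E.IsExt)
    (hBfree : FdMod.IsFree (E.X 0))
    -- first diagram
    (F₁ : Type) [AddCommGroup F₁] [Module (ZMod d) F₁]
    (ι : (E.X 0).V →ₗ[ZMod d] F₁) (π : F₁ →ₗ[ZMod d] (E.X 2).V)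
    (φ₁ : (E.X 1).V →ₗ[ZMod d] F₁)
    (hι : Function.Injective ι) (hπ : Function.Surjective π)
    (hex : ∀ y, π y = 0 ↔ ∃ x, ι x = y)
    (hc1 : ∀ x, φ₁ ((E.f 0).1 x) = ι x)
    (hc2 : ∀ x, π (φ₁ x) = (E.f 1).1 x)
    -- second diagram
    (F₁' : Type) [AddCommGroup F₁'] [Module (ZMod d) F₁']
    (ι' : (E.X 0).V →ₗ[ZMod d] F₁') (π' : F₁' →ₗ[ZMod d] (E.X 2).V)
    (φ₁' : (E.X 1).V →ₗ[ZMod d] F₁')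
    (hι' : Function.Injective ι') (hπ' : Function.Surjective π')
    (hex' : ∀ y, π' y = 0 ↔ ∃ x, ι' x = y)
    (hc1' : ∀ x, φ₁' ((E.f 0).1 x) = ι' x)
    (hc2' : ∀ x, π' (φ₁' x) = (E.f 1).1 x) :
    ∃ θ : F₁ ≃ₗ[ZMod d] F₁',
      (∀ x, θ (ι x) = ι' x) ∧ (∀ y, π' (θ y) = π y) ∧ (∀ x, θ (φ₁ x) = φ₁' x) := by
  have : NeZero d := ⟨by omega⟩
  obtain ⟨r, ⟨eB⟩⟩ := hBfree
  have := ZMod.injective_of_linearEquiv_pi eB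
  exact exists_linearEquiv_of_exact_of_injective (hE.2.2 0 (by norm_num))
    hι hπ hex hc1 hc2 hι' hπ' hex' hc1' hc2'

/-- uniqueness of `E`-diagrams in degree 2, used in Theorem 4.1 of
the paper.  Let `E = (0 → B → E₁ → E₂ → A → 0)` be a `2`-extension of finite
discrete `d`-torsion `Γ`-modules with `B = E.X 0` and `E₂ = E.X 2` free as
`ℤ/dℤ`-modules.  Then any two `E`-diagrams in the category of `ℤ/dℤ`-modules,
i.e. pairs `(F₁, φ₁)` of a short exact sequence `0 → B → F₁ → E₂ → 0` of
`ℤ/dℤ`-modules and a morphism of complexes `E → F` inducing the identity on `B`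
and `E₂`, are isomorphic via an isomorphism of short exact sequences inducing the
identity on `B` and `E₂`. -/
theorem statement16 (d : ℕ) (hd : 2 ≤ d)
    (Γ : Type) [Group Γ] [TopologicalSpace Γ] [IsTopologicalGroup Γ]
    [CompactSpace Γ] [T2Space Γ] [TotallyDisconnectedSpace Γ]
    (E : GPre d Γ 2) (hE : E.IsExt)
    (hBfree : FdMod.IsFree (E.X 0)) (hE2free : FdMod.IsFree (E.X 2))
    -- first diagram
    (F₁ : Type) [AddCommGroup F₁] [Module (ZMod d) F₁] [Finite F₁]
    (ι : (E.X 0).V →ₗ[ZMod d] F₁) (π : F₁ →ₗ[ZMod d] (E.X 2).V)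
    (φ₁ : (E.X 1).V →ₗ[ZMod d] F₁)
    (hι : Function.Injective ι) (hπ : Function.Surjective π)
    (hex : ∀ y, π y = 0 ↔ ∃ x, ι x = y)
    (hc1 : ∀ x, φ₁ ((E.f 0).1 x) = ι x)
    (hc2 : ∀ x, π (φ₁ x) = (E.f 1).1 x)
    -- second diagram
    (F₁' : Type) [AddCommGroup F₁'] [Module (ZMod d) F₁'] [Finite F₁']
    (ι' : (E.X 0).V →ₗ[ZMod d] F₁') (π' : F₁' →ₗ[ZMod d] (E.X 2).V)
    (φ₁' : (E.X 1).V →ₗ[ZMod d] F₁')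
    (hι' : Function.Injective ι') (hπ' : Function.Surjective π')
    (hex' : ∀ y, π' y = 0 ↔ ∃ x, ι' x = y)
    (hc1' : ∀ x, φ₁' ((E.f 0).1 x) = ι' x)
    (hc2' : ∀ x, π' (φ₁' x) = (E.f 1).1 x) :
    ∃ θ : F₁ ≃ₗ[ZMod d] F₁',
      (∀ x, θ (ι x) = ι' x) ∧ (∀ y, π' (θ y) = π y) ∧ (∀ x, θ (φ₁ x) = φ₁' x) :=
  statement16_general d hd Γ E hE hBfree F₁ ι π φ₁ hι hπ hex hc1 hc2 F₁' ι' π' φ₁' hι' hπ' hex' hc1'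
    hc2'
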